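/- Let H be a k-vertex graph with at least one edge and no isolated vertices, and let H' be obtained from H by adding a dominating vertex v*. Then wt(H') = wt(H) + 2. -/

import Mathlib

open SimpleGraph

/-- `H` has a copy in `G`: an injective graph homomorphism (i.e. a subgraph isomorphic to `H`). -/
def hasCopy {α β : Type*} (H : SimpleGraph α) (G : SimpleGraph β) : Prop :=
  ∃ f : H →g G, Function.Injective f

/-- `G` is `H`-saturated: `H`-free, and adding any missing edge creates a copy of `H`. -/
def isSat {α β : Type*} (H : SimpleGraph α) (G : SimpleGraph β) : Prop :=
  ¬ hasCopy H G ∧ ∀ x y : β, x ≠ y → ¬ G.Adj x y →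
    hasCopy H (G ⊔ SimpleGraph.fromEdgeSet {s(x, y)})

/-- The weight of an edge `uv`: with `deg u ≤ deg v`,
`wt(uv) = 2|N(u) ∩ N(v)| + |N(v) \ N(u)|`. -/
noncomputable def edgeWt {α : Type*} (H : SimpleGraph α) (u v : α) : ℕ :=
  if (H.neighborSet u).ncard ≤ (H.neighborSet v).ncard then
    2 * (H.neighborSet u ∩ H.neighborSet v).ncard + ((H.neighborSet v) \ (H.neighborSet u)).ncard
  else
    2 * (H.neighborSet u ∩ H.neighborSet v).ncard + ((H.neighborSet u) \ (H.neighborSet v)).ncard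

/-- The weight of a graph: the minimum weight of an edge. -/
noncomputable def graphWt {α : Type*} (H : SimpleGraph α) : ℕ :=
  sInf {w | ∃ u v, H.Adj u v ∧ w = edgeWt H u v}

/-- The saturation number: minimum number of edges of an `H`-saturated graph on `n` vertices. -/
noncomputable def satNum {α : Type*} (H : SimpleGraph α) (n : ℕ) : ℕ :=
  sInf {m | ∃ G : SimpleGraph (Fin n), isSat H G ∧ Nat.card G.edgeSet = m}

/-- The graph obtained from `H` by adding a dominating vertex (`none`). -/
def addDom {α : Type*} (H : SimpleGraph α) : SimpleGraph (Option α) :=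
  SimpleGraph.fromRel (fun x y => x = none ∨ ∃ u v, x = some u ∧ y = some v ∧ H.Adj u v)


/-!
Writing `wt(uv) = |N(u) ∩ N(v)| + max(deg u, deg v)`, adding the dominating vertex `v*` puts `v*`
into both neighbourhoods of an edge `uv` of `H`, so its weight grows by exactly `2`. An edge `v*u`
has weight `|V(H)| + deg u`, which is at least `wt(uw) + 2` for any edge `uw` of `H`; such an edge
exists because `H` has no isolated vertices.
-/

namespace SimpleGraph

variable {α : Type*}

section Weight

variable (G : SimpleGraph α)

theorem graphWt_le_edgeWt {u v : α} (h : G.Adj u v) : graphWt G ≤ edgeWt G u v :=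
  Nat.sInf_le ⟨u, v, h, rfl⟩

theorem exists_adj_graphWt_eq (hE : ∃ u v, G.Adj u v) :
    ∃ u v, G.Adj u v ∧ graphWt G = edgeWt G u v :=
  Nat.sInf_mem (s := {w | ∃ u v, G.Adj u v ∧ w = edgeWt G u v}) <|
    let ⟨u, v, h⟩ := hE; ⟨_, u, v, h, rfl⟩

variable [Finite α]

theorem edgeWt_eq_ncard_inter_add_max (u v : α) :
    edgeWt G u v = (G.neighborSet u ∩ G.neighborSet v).ncard +
      max (G.neighborSet u).ncard (G.neighborSet v).ncard := by
  have hu := Set.ncard_inter_add_ncard_sdiff_eq_ncard (G.neighborSet u) (G.neighborSet v)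
  have hv := Set.ncard_inter_add_ncard_sdiff_eq_ncard (G.neighborSet v) (G.neighborSet u)
  rw [Set.inter_comm] at hv
  unfold edgeWt
  split <;> omega

theorem edgeWt_comm (u v : α) : edgeWt G u v = edgeWt G v u := by
  rw [edgeWt_eq_ncard_inter_add_max, edgeWt_eq_ncard_inter_add_max, Set.inter_comm, max_comm]

theorem ncard_neighborSet_lt_card (v : α) : (G.neighborSet v).ncard < Nat.card α :=
  Set.ncard_lt_card fun h => G.loopless.irrefl v (h ▸ Set.mem_univ v : v ∈ G.neighborSet v)

theorem ncard_commonNeighbors_lt_left {u w : α} (h : G.Adj u w) :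
    (G.neighborSet u ∩ G.neighborSet w).ncard < (G.neighborSet u).ncard :=
  Set.ncard_lt_ncard <| Set.inter_subset_left.ssubset_of_ne fun he =>
    G.loopless.irrefl w (show w ∈ G.neighborSet u ∩ G.neighborSet w by rw [he]; exact h).2

theorem edgeWt_add_two_le {u w : α} (h : G.Adj u w) :
    edgeWt G u w + 2 ≤ Nat.card α + (G.neighborSet u).ncard := by
  have hu := G.ncard_commonNeighbors_lt_left h
  have hw := G.ncard_commonNeighbors_lt_left h.symm
  rw [Set.inter_comm] at hw
  have := G.ncard_neighborSet_lt_card u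
  have := G.ncard_neighborSet_lt_card w
  rw [edgeWt_eq_ncard_inter_add_max]
  omega

end Weight

section AddDom

variable (H : SimpleGraph α)

@[simp]
theorem addDom_adj_some_some {u v : α} : (addDom H).Adj (some u) (some v) ↔ H.Adj u v := by
  simp only [addDom, fromRel_adj, ne_eq, Option.some.injEq, reduceCtorEq, false_or]
  constructor
  · rintro ⟨-, ⟨u', v', rfl, rfl, h⟩ | ⟨u', v', rfl, rfl, h⟩⟩
    exacts [h, h.symm]
  · exact fun h => ⟨h.ne, Or.inl ⟨u, v, rfl, rfl, h⟩⟩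

@[simp]
theorem addDom_adj_none_some (u : α) : (addDom H).Adj none (some u) := by
  simp [addDom]

theorem neighborSet_addDom_none : (addDom H).neighborSet none = Set.range some := by
  ext (_ | u) <;> simp

theorem neighborSet_addDom_some (u : α) :
    (addDom H).neighborSet (some u) = insert none (some '' H.neighborSet u) := by
  ext (_ | v)
  · simpa using (addDom_adj_none_some H u).symm
  · simp

variable [Finite α]

theorem ncard_neighborSet_addDom_some (u : α) :
    ((addDom H).neighborSet (some u)).ncard = (H.neighborSet u).ncard + 1 := by
  rw [neighborSet_addDom_some, Set.ncard_insert_of_notMem (by simp),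
    Set.ncard_image_of_injective _ (Option.some_injective α)]

theorem edgeWt_addDom_some_some (u v : α) :
    edgeWt (addDom H) (some u) (some v) = edgeWt H u v + 2 := by
  have hinter : (addDom H).neighborSet (some u) ∩ (addDom H).neighborSet (some v) =
      insert none (some '' (H.neighborSet u ∩ H.neighborSet v)) := by
    rw [neighborSet_addDom_some, neighborSet_addDom_some]
    ext (_ | w) <;> simp
  rw [edgeWt_eq_ncard_inter_add_max, edgeWt_eq_ncard_inter_add_max, hinter,
    ncard_neighborSet_addDom_some, ncard_neighborSet_addDom_some,
    Set.ncard_insert_of_notMem (by simp), Set.ncard_image_of_injective _ (Option.some_injective α)]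
  omega

theorem edgeWt_addDom_none_some (u : α) :
    edgeWt (addDom H) none (some u) = Nat.card α + (H.neighborSet u).ncard := by
  have hinter : (addDom H).neighborSet none ∩ (addDom H).neighborSet (some u) =
      some '' H.neighborSet u := by
    rw [neighborSet_addDom_none, neighborSet_addDom_some]
    ext (_ | w) <;> simp
  have hnone : ((addDom H).neighborSet none).ncard = Nat.card α := by
    rw [neighborSet_addDom_none, ← Set.image_univ,
      Set.ncard_image_of_injective _ (Option.some_injective α), Set.ncard_univ]
  have := H.ncard_neighborSet_lt_card u
  rw [edgeWt_eq_ncard_inter_add_max, hinter, hnone, ncard_neighborSet_addDom_some,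
    Set.ncard_image_of_injective _ (Option.some_injective α)]
  omega

end AddDom

end SimpleGraph

theorem stmt7_general {α : Type*} [Fintype α] (H : SimpleGraph α)
    (hE : ∃ u v, H.Adj u v) (hiso : ∀ v : α, ∃ w, H.Adj v w) :
    graphWt (addDom H) = graphWt H + 2 := by
  obtain ⟨a, b, hab, hwt⟩ := H.exists_adj_graphWt_eq hE
  apply le_antisymm
  · calc graphWt (addDom H) ≤ edgeWt (addDom H) (some a) (some b) :=
          (addDom H).graphWt_le_edgeWt ((addDom_adj_some_some H).mpr hab)
      _ = graphWt H + 2 := by rw [edgeWt_addDom_some_some, hwt]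
  · have hdom (u : α) : graphWt H + 2 ≤ edgeWt (addDom H) none (some u) := by
      obtain ⟨w, huw⟩ := hiso u
      rw [edgeWt_addDom_none_some]
      exact (Nat.add_le_add_right (H.graphWt_le_edgeWt huw) 2).trans (H.edgeWt_add_two_le huw)
    obtain ⟨x, y, hxy, hwt'⟩ := (addDom H).exists_adj_graphWt_eq ⟨_, _, addDom_adj_none_some H a⟩
    rw [hwt']
    match x, y, hxy with
    | none, none, hnn => exact absurd hnn (addDom H).irrefl
    | none, some u, _ => exact hdom u
    | some u, none, _ => rw [edgeWt_comm]; exact hdom u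
    | some u, some v, huv =>
      rw [edgeWt_addDom_some_some]
      exact Nat.add_le_add_right (H.graphWt_le_edgeWt ((addDom_adj_some_some H).mp huv)) 2

/-- If the `k`-vertex graph `H` has an edge and no isolated vertices, then adding a
dominating vertex gives `wt(H') = wt(H) + 2`. -/
theorem stmt7 {α : Type*} [Fintype α] (H : SimpleGraph α) (k : ℕ) (hk : Fintype.card α = k)
    (hE : ∃ u v, H.Adj u v) (hiso : ∀ v : α, ∃ w, H.Adj v w) :
    graphWt (addDom H) = graphWt H + 2 :=
  stmt7_general H hE hiso
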